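/- Let ν be a probability measure on (0,∞)^V whose canonical field (β_i)_{i∈V} has the given finite-dimensional Laplace transforms. Then the field (β_i) is 1-dependent: if U, U′ ⊆ V satisfy d_𝒢(U,U′) ≥ 2 (graph distance), then (β_i)_{i∈U} and (β_j)_{j∈U′} are independent under ν. -/

import Mathlib

/-!
On a window `A ∪ B` with `A`, `B` disjoint and joined by no edge, every edge term of the
prescribed Laplace transform lies inside `A` or inside `B`, so the transform of `β` on `A ∪ B`
is the product of those on `A` and on `B`. A finite measure on the nonnegative orthant is
determined by its Laplace transform at integer points: these are the moments of its image under
`x ↦ e^{-x}` in the compact cube, where polynomials are dense (Stone–Weierstrass). Hence the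
factorization makes `β|_A` and `β|_B` independent. Finite subwindows of `U` and `U'` are such
pairs, and independence of all finite restrictions gives that of `β|_U` and `β|_{U'}`.
-/

open MeasureTheory

namespace VRJPStmt

variable {V : Type*} [DecidableEq V]

/-- Right-hand side of the Laplace transform of the random potential `β`, for a finite
window `U`: each non-oriented edge inside `U` is counted once (hence the factor `1/2` in
front of the sum over ordered pairs), and each boundary edge `{i,j}` with `i ∈ U`, `j ∉ U`
is counted once. -/
noncomputable def laplaceRHS (G : SimpleGraph V) [DecidableRel G.Adj]
    [∀ v : V, Fintype (G.neighborSet v)] (W : V → V → ℝ) (U : Finset V) (lam : V → ℝ) : ℝ :=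
  Real.exp
    (-(1/2) * ∑ i ∈ U, ∑ j ∈ U,
        (if G.Adj i j then W i j * (Real.sqrt ((1 + lam i) * (1 + lam j)) - 1) else 0)
      - ∑ i ∈ U, ∑ j ∈ G.neighborFinset i \ U, W i j * (Real.sqrt (1 + lam i) - 1))
    * ∏ i ∈ U, (1 + lam i) ^ (-(1/2) : ℝ)

/-- `ν` is a probability measure on `(0,∞)^V` whose canonical field `(β_i)` has the
prescribed finite-dimensional Laplace transforms. -/
def IsBetaField (G : SimpleGraph V) [DecidableRel G.Adj]
    [∀ v : V, Fintype (G.neighborSet v)] (W : V → V → ℝ)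
    (ν : Measure (V → ℝ)) : Prop :=
  IsProbabilityMeasure ν ∧ (∀ᵐ β ∂ν, ∀ i, 0 < β i) ∧
    ∀ U : Finset V, ∀ lam : V → ℝ, (∀ i, 0 ≤ lam i) →
      ∫ β, Real.exp (-(∑ i ∈ U, lam i * β i)) ∂ν = laplaceRHS G W U lam

/-- Weight `W_σ = Π W_{σ_k, σ_{k+1}}` of a path given as a list of vertices. -/
noncomputable def wWeight (W : V → V → ℝ) (l : List V) : ℝ :=
  ((l.zip l.tail).map (fun p => W p.1 p.2)).prod

/-- `(2β)_σ = Π_{k=0}^m 2 β_{σ_k}`. -/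
noncomputable def twoBetaFull (β : V → ℝ) (l : List V) : ℝ :=
  (l.map (fun k => 2 * β k)).prod

/-- `(2β)^−_σ = Π_{k=0}^{m−1} 2 β_{σ_k}` (all vertices but the last one). -/
noncomputable def twoBetaMinus (β : V → ℝ) (l : List V) : ℝ :=
  (l.dropLast.map (fun k => 2 * β k)).prod

/-- `l` is a path from `i` to `j` for the adjacency relation `A`. -/
def IsWalkList (A : V → V → Prop) (i j : V) (l : List V) : Prop :=
  l ≠ [] ∧ l.head? = some i ∧ l.getLast? = some j ∧ l.Chain' A

/-- Paths from `i` to `j` staying in the set `S`. -/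
def PathsIn (G : SimpleGraph V) (S : Set V) (i j : V) (l : List V) : Prop :=
  IsWalkList G.Adj i j l ∧ ∀ x ∈ l, x ∈ S

/-- Paths starting at `i`, staying in `S` except for the last vertex, which is outside `S`. -/
def ExitPaths (G : SimpleGraph V) (S : Set V) (i : V) (l : List V) : Prop :=
  l ≠ [] ∧ l.head? = some i ∧ l.Chain' G.Adj ∧ (∀ x ∈ l.dropLast, x ∈ S) ∧
    (∀ x, l.getLast? = some x → x ∉ S)

/-- `Ĝ^{(n)}(i,j) = Σ_{σ ∈ 𝒫^{(n)}_{i,j}} W_σ/(2β)_σ` if `i,j ∈ V_n`, `0` otherwise. -/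
noncomputable def GhatN (G : SimpleGraph V) (W : V → V → ℝ) (Vseq : ℕ → Finset V)
    (n : ℕ) (i j : V) (β : V → ℝ) : ℝ :=
  if i ∈ Vseq n ∧ j ∈ Vseq n then
    ∑' l : {l : List V // PathsIn G (↑(Vseq n)) i j l}, wWeight W ↑l / twoBetaFull β ↑l
  else 0

/-- `ψ^{(n)}(i) = Σ_{σ ∈ 𝒫̄^{(n)}_i} W_σ/(2β)^−_σ` if `i ∈ V_n`, `1` otherwise. -/
noncomputable def psiN (G : SimpleGraph V) (W : V → V → ℝ) (Vseq : ℕ → Finset V)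
    (n : ℕ) (i : V) (β : V → ℝ) : ℝ :=
  if i ∈ Vseq n then
    ∑' l : {l : List V // ExitPaths G (↑(Vseq n)) i l}, wWeight W ↑l / twoBetaMinus β ↑l
  else 1

/-- The σ-algebra `ℱ_n` generated by the coordinates `(β_i)_{i ∈ V_n}`. -/
def FiltN (Vseq : ℕ → Finset V) (n : ℕ) : MeasurableSpace (V → ℝ) :=
  MeasurableSpace.comap (fun β (i : {x : V // x ∈ Vseq n}) => β ↑i) inferInstance

/-- `(V_n)` is an increasing exhausting sequence of finite connected subsets of the graph. -/
def IsExhaustion (G : SimpleGraph V) (Vseq : ℕ → Finset V) : Prop :=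
  (∀ n, Vseq n ⊆ Vseq (n+1)) ∧ (∀ n, (G.induce (↑(Vseq n) : Set V)).Connected) ∧
    ∀ x : V, ∃ n, x ∈ Vseq n

end VRJPStmt

section Laplace

open scoped unitInterval
open BoundedContinuousFunction

variable {ι : Type*}

namespace MeasureTheory.Measure

theorem ext_of_integral_prod_pow_eq [Fintype ι] {P P' : Measure (ι → I)} [IsFiniteMeasure P]
    [IsFiniteMeasure P']
    (h : ∀ k : ι → ℕ, ∫ y, ∏ i, (y i : ℝ) ^ k i ∂P = ∫ y, ∏ i, (y i : ℝ) ^ k i ∂P') :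
    P = P' := by
  let coord : ι → (ι → I) →ᵇ ℝ := fun i => mkOfCompact ⟨fun y => y i, by fun_prop⟩
  let A : StarSubalgebra ℝ ((ι → I) →ᵇ ℝ) :=
    { Algebra.adjoin ℝ (Set.range coord) with
      star_mem' := fun {f} hf => by
        have : star f = f := by ext; simp
        rwa [this] }
  refine ext_of_forall_mem_subalgebra_integral_eq_of_polish (A := A) ?_ ?_
  · intro x y hxy
    obtain ⟨i, hi⟩ := Function.ne_iff.mp hxy
    refine ⟨_, ⟨_, ⟨coord i, Algebra.subset_adjoin ⟨i, rfl⟩, rfl⟩, rfl⟩, ?_⟩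
    simpa [coord, Subtype.ext_iff] using hi
  · intro g hg
    change g ∈ Algebra.adjoin ℝ (Set.range coord) at hg
    rw [Algebra.adjoin_range_eq_range_aeval] at hg
    obtain ⟨p, rfl⟩ := hg
    simp only [AlgHom.toRingHom_eq_coe, RingHom.coe_coe]
    induction p using MvPolynomial.induction_on' with
    | monomial u a =>
      have hmonomial : ∀ y, MvPolynomial.aeval coord (MvPolynomial.monomial u a) y
          = a * ∏ i, (y i : ℝ) ^ u i := by
        intro y
        rw [MvPolynomial.aeval_monomial, Finsupp.prod_fintype _ _ (by simp)]
        simp [coord]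
      simp only [hmonomial, integral_const_mul, h]
    | add p q hp hq =>
      simp only [map_add, BoundedContinuousFunction.add_apply]
      rw [integral_add (integrable _ _) (integrable _ _),
        integral_add (integrable _ _) (integrable _ _), hp, hq]

noncomputable def expNegCube (x : ι → ℝ) : ι → I :=
  fun i => Set.projIcc 0 1 zero_le_one (Real.exp (-x i))

lemma continuous_expNegCube : Continuous (expNegCube (ι := ι)) := by
  unfold expNegCube; fun_prop

lemma coe_expNegCube {x : ι → ℝ} (hx : 0 ≤ x) (i : ι) :
    (expNegCube x i : ℝ) = Real.exp (-x i) :=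
  congrArg Subtype.val (Set.projIcc_of_mem _
    ⟨(Real.exp_pos _).le, Real.exp_le_one_iff.mpr (neg_nonpos.mpr (hx i))⟩)

lemma integral_prod_pow_map_expNegCube [Fintype ι] {μ : Measure (ι → ℝ)}
    (hμ : ∀ᵐ x ∂μ, 0 ≤ x) (k : ι → ℕ) :
    ∫ y, ∏ i, (y i : ℝ) ^ k i ∂μ.map expNegCube = ∫ x, Real.exp (-∑ i, k i * x i) ∂μ := by
  rw [integral_map continuous_expNegCube.aemeasurable
    (Continuous.aestronglyMeasurable (by fun_prop))]
  refine integral_congr_ae (hμ.mono fun x hx => ?_)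
  simp only [coe_expNegCube hx, ← Real.exp_nat_mul, ← Real.exp_sum, ← Finset.sum_neg_distrib,
    mul_neg]

lemma map_neg_log_map_expNegCube [Fintype ι] {μ : Measure (ι → ℝ)} (hμ : ∀ᵐ x ∂μ, 0 ≤ x) :
    (μ.map expNegCube).map (fun y i => -Real.log (y i)) = μ := by
  rw [Measure.map_map (by fun_prop) continuous_expNegCube.measurable]
  conv_rhs => rw [← Measure.map_id (μ := μ)]
  refine Measure.map_congr (hμ.mono fun x hx => funext fun i => ?_)
  simp [coe_expNegCube hx]

theorem ext_of_integral_exp_neg_sum_eq [Fintype ι] {μ μ' : Measure (ι → ℝ)} [IsFiniteMeasure μ]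
    [IsFiniteMeasure μ'] (hμ : ∀ᵐ x ∂μ, 0 ≤ x) (hμ' : ∀ᵐ x ∂μ', 0 ≤ x)
    (h : ∀ k : ι → ℕ, ∫ x, Real.exp (-∑ i, k i * x i) ∂μ = ∫ x, Real.exp (-∑ i, k i * x i) ∂μ') :
    μ = μ' := by
  have hmap : μ.map expNegCube = μ'.map expNegCube := ext_of_integral_prod_pow_eq fun k => by
    rw [integral_prod_pow_map_expNegCube hμ, integral_prod_pow_map_expNegCube hμ', h]
  rw [← map_neg_log_map_expNegCube hμ, ← map_neg_log_map_expNegCube hμ', hmap]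

end MeasureTheory.Measure

namespace ProbabilityTheory

theorem indepFun_of_integral_exp_neg_sum_mul {κ Ω : Type*} [Fintype ι] [Fintype κ]
    [MeasurableSpace Ω] {P : Measure Ω} [IsProbabilityMeasure P] {X : Ω → ι → ℝ}
    {Y : Ω → κ → ℝ} (hX : Measurable X) (hY : Measurable Y) (hX0 : ∀ᵐ ω ∂P, 0 ≤ X ω)
    (hY0 : ∀ᵐ ω ∂P, 0 ≤ Y ω)
    (h : ∀ (s : ι → ℕ) (t : κ → ℕ),
      ∫ ω, Real.exp (-∑ i, s i * X ω i) * Real.exp (-∑ j, t j * Y ω j) ∂P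
        = (∫ ω, Real.exp (-∑ i, s i * X ω i) ∂P) * ∫ ω, Real.exp (-∑ j, t j * Y ω j) ∂P) :
    IndepFun X Y P := by
  rw [indepFun_iff_map_prod_eq_prod_map_map hX.aemeasurable hY.aemeasurable]
  -- compare the two laws on `ι ⊕ κ → ℝ`, where a single Laplace transform sees both factors
  let e := MeasurableEquiv.sumPiEquivProdPi (fun _ : ι ⊕ κ => ℝ)
  have hsplit : ∀ (k : ι ⊕ κ → ℕ) (w : (ι → ℝ) × (κ → ℝ)),
      Real.exp (-∑ s, k s * e.symm w s)
        = Real.exp (-∑ i, k (.inl i) * w.1 i) * Real.exp (-∑ j, k (.inr j) * w.2 j) := by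
    intro k w
    rw [Fintype.sum_sum_type, neg_add, Real.exp_add]
    rfl
  have hX0' : ∀ᵐ x ∂P.map X, 0 ≤ x := (ae_map_iff hX.aemeasurable measurableSet_Ici).2 hX0
  have hY0' : ∀ᵐ y ∂P.map Y, 0 ≤ y := (ae_map_iff hY.aemeasurable measurableSet_Ici).2 hY0
  refine e.symm.map_measurableEquiv_injective
    (Measure.ext_of_integral_exp_neg_sum_eq ?_ ?_ fun k => ?_)
  · rw [e.symm.measurableEmbedding.ae_map_iff]
    refine (ae_map_iff (hX.prodMk hY).aemeasurable
      (measurableSet_Ici.preimage e.symm.measurable)).2 ?_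
    filter_upwards [hX0, hY0] with ω hx hy s
    cases s with
    | inl i => exact hx i
    | inr j => exact hy j
  · rw [e.symm.measurableEmbedding.ae_map_iff]
    filter_upwards [Measure.quasiMeasurePreserving_fst.ae hX0',
      Measure.quasiMeasurePreserving_snd.ae hY0'] with w hx hy s
    cases s with
    | inl i => exact hx i
    | inr j => exact hy j
  · have hcont : Continuous fun z : ι ⊕ κ → ℝ => Real.exp (-∑ s, k s * z s) := by fun_prop
    rw [integral_map e.symm.measurable.aemeasurable hcont.aestronglyMeasurable,
      integral_map e.symm.measurable.aemeasurable hcont.aestronglyMeasurable]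
    simp only [hsplit]
    rw [integral_map (hX.prodMk hY).aemeasurable (Continuous.aestronglyMeasurable (by fun_prop)),
      integral_prod_mul (fun x : ι → ℝ => Real.exp (-∑ i, (k (.inl i) : ℝ) * x i))
        (fun y : κ → ℝ => Real.exp (-∑ j, (k (.inr j) : ℝ) * y j)),
      integral_map hX.aemeasurable (Continuous.aestronglyMeasurable (by fun_prop)),
      integral_map hY.aemeasurable (Continuous.aestronglyMeasurable (by fun_prop))]
    exact h _ _

end ProbabilityTheory

end Laplace

namespace VRJPStmt

variable {V : Type*} [DecidableEq V]

section LaplaceRHS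

variable {A B : Finset V}

lemma sum_sum_ite_adj_union (G : SimpleGraph V) [DecidableRel G.Adj] (f : V → V → ℝ)
    (hd : Disjoint A B) (hadj : ∀ i ∈ A, ∀ j ∈ B, ¬ G.Adj i j) :
    ∑ i ∈ A ∪ B, ∑ j ∈ A ∪ B, (if G.Adj i j then f i j else 0)
      = ∑ i ∈ A, ∑ j ∈ A, (if G.Adj i j then f i j else 0)
        + ∑ i ∈ B, ∑ j ∈ B, (if G.Adj i j then f i j else 0) := by
  rw [Finset.sum_union hd]
  congr 1 <;> refine Finset.sum_congr rfl fun i hi => ?_ <;> rw [Finset.sum_union hd]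
  · rw [Finset.sum_eq_zero fun j hj => if_neg (hadj i hi j hj), add_zero]
  · rw [Finset.sum_eq_zero fun j hj => if_neg fun h => hadj j hj i hi h.symm, zero_add]

lemma neighborFinset_sdiff_union_of_not_adj (G : SimpleGraph V) [Fintype (G.neighborSet i)]
    (hi : ∀ j ∈ B, ¬ G.Adj i j) :
    G.neighborFinset i \ (A ∪ B) = G.neighborFinset i \ A := by
  ext j
  simp only [Finset.mem_sdiff, Finset.mem_union, SimpleGraph.mem_neighborFinset]
  exact ⟨fun h => ⟨h.1, fun hA => h.2 (.inl hA)⟩,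
    fun h => ⟨h.1, fun hAB => hAB.elim h.2 fun hB => hi j hB h.1⟩⟩

lemma sum_sum_sdiff_union (G : SimpleGraph V) [∀ v : V, Fintype (G.neighborSet v)]
    (f : V → V → ℝ) (hd : Disjoint A B) (hadj : ∀ i ∈ A, ∀ j ∈ B, ¬ G.Adj i j) :
    ∑ i ∈ A ∪ B, ∑ j ∈ G.neighborFinset i \ (A ∪ B), f i j
      = ∑ i ∈ A, ∑ j ∈ G.neighborFinset i \ A, f i j
        + ∑ i ∈ B, ∑ j ∈ G.neighborFinset i \ B, f i j := by
  rw [Finset.sum_union hd]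
  congr 1 <;> refine Finset.sum_congr rfl fun i hi => ?_
  · rw [neighborFinset_sdiff_union_of_not_adj G (hadj i hi)]
  · rw [Finset.union_comm,
      neighborFinset_sdiff_union_of_not_adj G fun j hj h => hadj j hj i hi h.symm]

lemma laplaceRHS_union (G : SimpleGraph V) [DecidableRel G.Adj]
    [∀ v : V, Fintype (G.neighborSet v)] (W : V → V → ℝ) (hd : Disjoint A B)
    (hadj : ∀ i ∈ A, ∀ j ∈ B, ¬ G.Adj i j) (lam : V → ℝ) :
    laplaceRHS G W (A ∪ B) lam = laplaceRHS G W A lam * laplaceRHS G W B lam := by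
  unfold laplaceRHS
  rw [sum_sum_ite_adj_union G _ hd hadj, sum_sum_sdiff_union G _ hd hadj, Finset.prod_union hd,
    mul_mul_mul_comm, ← Real.exp_add]
  congr 2
  ring

end LaplaceRHS

open ProbabilityTheory in
theorem IsBetaField.indepFun_restrict {G : SimpleGraph V} [DecidableRel G.Adj]
    [∀ v : V, Fintype (G.neighborSet v)] {W : V → V → ℝ} {ν : Measure (V → ℝ)}
    (hν : IsBetaField G W ν) {A B : Finset V} (hd : Disjoint A B)
    (hadj : ∀ i ∈ A, ∀ j ∈ B, ¬ G.Adj i j) :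
    IndepFun (fun β (i : A) => β i) (fun β (j : B) => β j) ν := by
  obtain ⟨_, hpos, hlaplace⟩ := hν
  have hpos' : ∀ C : Finset V, ∀ᵐ β ∂ν, 0 ≤ fun i : C => β i :=
    fun C => hpos.mono fun β hβ i => (hβ i).le
  refine indepFun_of_integral_exp_neg_sum_mul (by fun_prop) (by fun_prop) (hpos' A) (hpos' B)
    fun s t => ?_
  let lam : V → ℝ := fun v =>
    if h : v ∈ A then s ⟨v, h⟩ else if h : v ∈ B then t ⟨v, h⟩ else 0
  have hlam : ∀ v, 0 ≤ lam v := by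
    intro v
    unfold lam
    split_ifs <;> positivity
  have hsumA : ∀ β : V → ℝ, ∑ i : A, (s i : ℝ) * β i = ∑ i ∈ A, lam i * β i := by
    intro β
    rw [← Finset.sum_coe_sort A]
    exact Finset.sum_congr rfl fun i _ => by simp [lam, i.2]
  have hsumB : ∀ β : V → ℝ, ∑ j : B, (t j : ℝ) * β j = ∑ j ∈ B, lam j * β j := by
    intro β
    rw [← Finset.sum_coe_sort B]
    exact Finset.sum_congr rfl fun j _ => by simp [lam, j.2, Finset.disjoint_right.mp hd j.2]
  simp only [hsumA, hsumB, ← Real.exp_add, ← neg_add, ← Finset.sum_union hd]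
  rw [hlaplace _ _ hlam, hlaplace _ _ hlam, hlaplace _ _ hlam, laplaceRHS_union G W hd hadj]

open ProbabilityTheory in
/-- 1-dependence of the field `β`: if `U, U' ⊆ V` are at graph distance
at least 2, then `(β_i)_{i∈U}` and `(β_j)_{j∈U'}` are independent under `ν`. -/
theorem stmt6 {V : Type*} [DecidableEq V] [Infinite V] (G : SimpleGraph V)
    [DecidableRel G.Adj] [∀ v : V, Fintype (G.neighborSet v)] (hconn : G.Connected)
    (W : V → V → ℝ) (hWsymm : ∀ i j, W i j = W j i) (hWpos : ∀ i j, G.Adj i j → 0 < W i j)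
    (ν : MeasureTheory.Measure (V → ℝ)) (hν : IsBetaField G W ν)
    (U U' : Set V) (hdist : ∀ i ∈ U, ∀ j ∈ U', 2 ≤ G.dist i j) :
    IndepFun (fun β (i : U) => β ↑i) (fun β (j : U') => β ↑j) ν := by
  have := hν.1
  refine IndepFun.process_indepFun_process (X := fun (i : U) (β : V → ℝ) => β i)
    (Y := fun (j : U') (β : V → ℝ) => β j)
    (fun _ => measurable_pi_apply _) (fun _ => measurable_pi_apply _) fun I J => ?_
  let A := I.map (Function.Embedding.subtype _)
  let B := J.map (Function.Embedding.subtype _)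
  have hdist' : ∀ i ∈ A, ∀ j ∈ B, 2 ≤ G.dist i j := by
    simp only [A, B, Finset.mem_map, Function.Embedding.coe_subtype]
    rintro _ ⟨i, -, rfl⟩ _ ⟨j, -, rfl⟩
    exact hdist i i.2 j j.2
  have hd : Disjoint A B := Finset.disjoint_left.mpr fun i hi hj => by
    simpa using hdist' i hi i hj
  have hadj : ∀ i ∈ A, ∀ j ∈ B, ¬ G.Adj i j := fun i hi j hj h => by
    simpa [SimpleGraph.dist_eq_one_iff_adj.mpr h] using hdist' i hi j hj
  exact (hν.indepFun_restrict hd hadj).comp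
    (φ := fun x (i : I) => x ⟨i.1.1, Finset.mem_map_of_mem _ i.2⟩)
    (ψ := fun x (j : J) => x ⟨j.1.1, Finset.mem_map_of_mem _ j.2⟩) (by fun_prop) (by fun_prop)

end VRJPStmt
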